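/- arXiv:2307.03100 — 2 statements merged into one kernel-verified Lean document; each statement's English description precedes it below -/
import Mathlib

section
/- Let φ be a formal power series over ℚ with constant coefficient 1, let f := t/φ(t) (a formal power series with zero constant term and linear coefficient 1), and let g be the compositional inverse of f, i.e. the unique formal power series with zero constant term satisfying g(f(t)) = t. Then the identity (Σ_{n≥0} [t^n](φ(t)^n) · z^n) · g(z) = z · g'(z) holds in ℚ[[z]]; that is, the series whose n-th coefficient is the t^n-coefficient of the n-th power of φ equals z·g'(z)/g(z). -/
open PowerSeries

/-- Formal derivative of a power series. -/
noncomputable def D (f : PowerSeries ℚ) : PowerSeries ℚ :=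
  PowerSeries.mk fun n => ((n + 1 : ℕ) : ℚ) * PowerSeries.coeff (n + 1) f

/-- `comp f g` is the composition `g ∘ f`, i.e. the power series `g(f(t))`,
which is well defined (by this formula) when `f` has zero constant term. -/
noncomputable def comp (f g : PowerSeries ℚ) : PowerSeries ℚ :=
  PowerSeries.mk fun n =>
    ∑ k ∈ Finset.range (n + 1), PowerSeries.coeff k g * PowerSeries.coeff n (f ^ k)

/-!
Since `f φ = X`, we have `f^k φ^N = X^k φ^(N-k)`, so the `n`-th coefficient of `g(f) · φ^n = X φ^n`
is `∑ₖ [t^k]g · [t^(n-k)]φ^(n-k)`, the `n`-th coefficient of the left-hand side. The chain rule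
turns `g(f) = X` into `g'(f) · f' = 1`; multiplying by `φ^(n+1)` and using
`[t^m](φ^(m+1) f') = δ_{m,0}` gives the Lagrange inversion formula `[t^n]g' = [t^n]φ^(n+1)`,
i.e. `X g'` and `X φ^n` have the same `n`-th coefficient.
-/

namespace PowerSeries

open Finset

section CommSemiring

variable {R : Type*} [CommSemiring R] {f φ : R⟦X⟧}

theorem coeff_pow_mul_of_lt (hf : constantCoeff f = 0) (h : R⟦X⟧) {i k : ℕ} (hik : i < k) :
    coeff i (f ^ k * h) = 0 := by
  obtain ⟨q, rfl⟩ := X_dvd_iff.mpr hf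
  rw [mul_pow, mul_assoc, coeff_X_pow_mul', if_neg (by omega)]

theorem pow_mul_pow_of_mul_eq_X (hfφ : f * φ = X) {k N : ℕ} (hkN : k ≤ N) :
    f ^ k * φ ^ N = X ^ k * φ ^ (N - k) := by
  rw [← Nat.add_sub_cancel' hkN, pow_add, ← mul_assoc, ← mul_pow, hfφ, Nat.add_sub_cancel_left]

end CommSemiring

section CommRing

variable {R : Type*} [CommRing R] {f φ : R⟦X⟧}

/-- Only the terms `k ≤ n` of `g` matter, because `f ^ k` has order at least `k`. -/
theorem coeff_subst_mul (hf : constantCoeff f = 0) (g h : R⟦X⟧) (n : ℕ) :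
    coeff n (g.subst f * h) = ∑ k ∈ range (n + 1), coeff k g * coeff n (f ^ k * h) := by
  have hS : HasSubst f := HasSubst.of_constantCoeff_zero' hf
  have hsplit : g.subst f = f ^ (n + 1) * (mk fun i ↦ coeff (i + (n + 1)) g).subst f
      + ∑ k ∈ range (n + 1), C (coeff k g) * f ^ k := by
    conv_lhs => rw [eq_X_pow_mul_shift_add_trunc (n + 1) g]
    rw [subst_add hS, subst_mul hS, subst_pow hS, subst_X hS, subst_coe hS,
      Polynomial.aeval_def, eval₂_trunc_eq_sum_range]
    rfl
  rw [hsplit, add_mul, map_add, mul_assoc, coeff_pow_mul_of_lt hf _ (Nat.lt_succ_self n),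
    zero_add, sum_mul, map_sum]
  simp only [mul_assoc, coeff_C_mul]

theorem coeff_mk_coeff_pow_mul (hfφ : f * φ = X) (hf : constantCoeff f = 0) {g : R⟦X⟧}
    (hgf : g.subst f = X) (n : ℕ) :
    coeff n ((mk fun n ↦ coeff n (φ ^ n)) * g) = coeff n (X * φ ^ n) := by
  rw [← hgf, coeff_subst_mul hf, mul_comm, coeff_mul, Nat.sum_antidiagonal_eq_sum_range_succ
    (fun i j ↦ coeff i g * coeff j (mk fun n ↦ coeff n (φ ^ n)))]
  refine sum_congr rfl fun k hk ↦ ?_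
  have hkn : k ≤ n := Nat.lt_succ_iff.mp (mem_range.mp hk)
  rw [coeff_mk, pow_mul_pow_of_mul_eq_X hfφ hkn, coeff_X_pow_mul', if_pos hkn]

end CommRing

section Field

variable {K : Type*} [Field K] [CharZero K] {f φ : K⟦X⟧}

theorem coeff_pow_mul_derivative_self (m : ℕ) :
    coeff m (φ ^ m * d⁄dX K φ) = coeff (m + 1) (φ ^ (m + 1)) := by
  have h := coeff_derivative (φ ^ (m + 1)) m
  rw [derivative_pow, Nat.add_sub_cancel, mul_assoc, ← map_natCast (C (R := K)),
    coeff_C_mul] at h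
  push_cast at h
  exact mul_left_cancel₀ (Nat.cast_add_one_ne_zero m) (by rw [h, mul_comm])

/-- For `m ≥ 1`, `φ^(m+1) f' = φ^m - X (φ^m)' / m`, and the `m`-th coefficients of the two
terms cancel. -/
theorem coeff_pow_succ_mul_derivative (hfφ : f * φ = X) (hf : constantCoeff f = 0) (m : ℕ) :
    coeff m (φ ^ (m + 1) * d⁄dX K f) = if m = 0 then 1 else 0 := by
  have hφ : φ * d⁄dX K f = 1 - f * d⁄dX K φ := by
    have h := congrArg (d⁄dX K) hfφ
    rw [Derivation.leibniz, derivative_X, smul_eq_mul, smul_eq_mul] at h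
    rw [← h]
    ring
  rcases m with _ | m
  · rw [zero_add, pow_one, hφ, coeff_zero_eq_constantCoeff_apply, map_sub, map_mul, hf]
    simp
  · have hsplit : φ ^ (m + 2) * d⁄dX K f = φ ^ (m + 1) - X * (φ ^ m * d⁄dX K φ) := by
      rw [pow_succ, mul_assoc, hφ, mul_sub, mul_one, ← mul_assoc, mul_comm _ f, ← pow_one f,
        pow_mul_pow_of_mul_eq_X hfφ (by omega : 1 ≤ m + 1), Nat.add_sub_cancel]
      ring
    rw [hsplit, map_sub, coeff_succ_X_mul, coeff_pow_mul_derivative_self, sub_self,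
      if_neg m.succ_ne_zero]

theorem coeff_derivative_eq_coeff_pow_succ (hfφ : f * φ = X) (hf : constantCoeff f = 0)
    {g : K⟦X⟧} (hgf : g.subst f = X) (n : ℕ) :
    coeff n (d⁄dX K g) = coeff n (φ ^ (n + 1)) := by
  have hchain : (d⁄dX K g).subst f * (φ ^ (n + 1) * d⁄dX K f) = φ ^ (n + 1) := by
    rw [mul_left_comm, ← derivative_subst (HasSubst.of_constantCoeff_zero' hf), hgf,
      derivative_X, mul_one]
  have hterm : ∀ k ∈ range (n + 1),
      coeff n (f ^ k * (φ ^ (n + 1) * d⁄dX K f)) = if k = n then 1 else 0 := by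
    intro k hk
    have hkn : k ≤ n := Nat.lt_succ_iff.mp (mem_range.mp hk)
    rw [← mul_assoc, pow_mul_pow_of_mul_eq_X hfφ (by omega), mul_assoc, coeff_X_pow_mul',
      if_pos hkn, show n + 1 - k = n - k + 1 by omega, coeff_pow_succ_mul_derivative hfφ hf]
    exact if_congr (by omega) rfl rfl
  rw [← hchain, coeff_subst_mul hf, sum_congr rfl fun k hk ↦ by rw [hterm k hk]]
  simp

end Field

end PowerSeries

theorem D_eq_derivative (h : ℚ⟦X⟧) : D h = d⁄dX ℚ h := by
  ext n
  rw [D, coeff_mk, coeff_derivative]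
  push_cast
  ring

theorem comp_eq_subst {f : ℚ⟦X⟧} (hf : constantCoeff f = 0) (g : ℚ⟦X⟧) :
    comp f g = g.subst f := by
  ext n
  rw [comp, coeff_mk, ← mul_one (g.subst f), coeff_subst_mul hf]
  simp only [mul_one]

theorem coeff_pow_generating_eq_log_deriv_of_inverse_general
    (φ f g : PowerSeries ℚ)
    (hφ : PowerSeries.constantCoeff φ = 1)
    (hf : f * φ = PowerSeries.X)
    (hgf : comp f g = PowerSeries.X) :
    (PowerSeries.mk fun n => PowerSeries.coeff n (φ ^ n)) * g
      = PowerSeries.X * D g := by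
  have hf0 : constantCoeff f = 0 := by simpa [hφ] using congrArg constantCoeff hf
  rw [comp_eq_subst hf0] at hgf
  ext n
  rw [coeff_mk_coeff_pow_mul hf hf0 hgf, D_eq_derivative]
  rcases n with _ | n
  · simp
  · rw [coeff_succ_X_mul, coeff_succ_X_mul, coeff_derivative_eq_coeff_pow_succ hf hf0 hgf]

/-- Lagrange-inversion-type lemma: if `φ` has constant coefficient `1`,
`f = t/φ(t)` (i.e. `f * φ = X`), and `g` is the compositional inverse of `f`
(zero constant term and `g(f(t)) = t`), then
`(Σ_n [t^n](φ^n) z^n) · g(z) = z · g'(z)`. -/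
theorem coeff_pow_generating_eq_log_deriv_of_inverse
    (φ f g : PowerSeries ℚ)
    (hφ : PowerSeries.constantCoeff φ = 1)
    (hf : f * φ = PowerSeries.X)
    (hg0 : PowerSeries.constantCoeff g = 0)
    (hgf : comp f g = PowerSeries.X) :
    (PowerSeries.mk fun n => PowerSeries.coeff n (φ ^ n)) * g
      = PowerSeries.X * D g :=
  coeff_pow_generating_eq_log_deriv_of_inverse_general φ f g hφ hf hgf
end

section
/- For every even n ≥ 2, the closed form of the Berger-sphere eta coefficient equals Habel's conjectured expression: (2/n!)·B_n^{(n)}(n/2) = −(2/(n−1)!)·Σ_{l=0}^{n−1} (B_{l+1}(n/2 − 1)/(l+1)!) · Φ^{(l)}(1 − n/2), where Φ(x) = ∏_{i=0}^{n−2}(x+i) and B_m are the ordinary Bernoulli polynomials. -/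
open PowerSeries

/-- `Φ(x) = ∏_{i=0}^{n−2} (x + i)`, a monic polynomial of degree `n − 1`. -/
noncomputable def Phi (n : ℕ) : Polynomial ℚ :=
  ∏ i ∈ Finset.range (n - 1), (Polynomial.X + Polynomial.C (i : ℚ))

/-!
Write `t / (e^t - 1) = e^{-t} / W` with `W = (1 - e^{-t}) / t` (`expNeg` and
`oneSubExpNegDivX`), and let `u = t W = 1 - e^{-t}`, so that `u' = e^{-t}`. Residue calculus for
`u` (Lagrange inversion) gives `[t^N] u^i u' W^{-(N+1)} = δ_{iN}`. Expanding `e^{-pt} = (1 - u)^p`,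
this shows `Φ(-p) = N! [t^N] (e^{-pt} e^{-t} W^{-(N+1)})` for every `p ∈ ℕ` (where `n = N + 1`),
hence `Φ(x) = N! [t^N] (e^{xt} e^{-t} W^{-n})` as polynomials. Pairing this with the Taylor
expansion of `Φ` at `1 - n/2` turns the Bernoulli sum into
`N! [t^n] (e^{-t} W^{-n} (B(t) - e^{(1-n/2)t}))` with `B(t) = t / (e^t - 1)`. Here
`e^{-t} W^{-n} B(t) = e^{-2t} W^{-(n+1)}` has vanishing `t^n`-coefficient for `n ≥ 2` by the same
residue calculus, and `e^{-t} W^{-n} e^{(1-n/2)t} = B(t)^n e^{nt/2}`.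
-/

namespace Polynomial

theorem eval_iterate_derivative_eq_sum {R : Type*} [CommSemiring R] {P : R[X]} {n : ℕ}
    (hP : P.natDegree < n) (l : ℕ) (a : R) :
    (derivative^[l] P).eval a
      = ∑ m ∈ Finset.range n, P.coeff m * (m.descFactorial l * a ^ (m - l)) := by
  conv_lhs => rw [P.as_sum_range' n hP]
  simp only [iterate_derivative_sum, eval_finsetSum, ← C_mul_X_pow_eq_monomial,
    iterate_derivative_C_mul, iterate_derivative_X_pow_eq_smul, eval_mul, eval_C, eval_smul,
    eval_pow, eval_X, smul_eq_mul]

end Polynomial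

namespace PowerSeries

open Finset Nat

variable {K : Type*} [Field K]

/-- For `u = X * w`, `u' / u ^ (r + 2) = -(u ^ -(r + 1))' / (r + 1)` is a derivative, so it has
no residue. -/
theorem coeff_succ_derivative_X_mul_mul_inv_pow [CharZero K] {w : K⟦X⟧}
    (hw : constantCoeff w ≠ 0) (r : ℕ) :
    coeff (r + 1) (d⁄dX K (X * w) * w⁻¹ ^ (r + 2)) = 0 := by
  have hinv : w * w⁻¹ = 1 := PowerSeries.mul_inv_cancel w hw
  have hsplit : d⁄dX K (X * w) * w⁻¹ ^ (r + 2)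
      = w⁻¹ ^ (r + 1) + X * (d⁄dX K w * w⁻¹ ^ (r + 2)) := by
    simp only [Derivation.leibniz, derivative_X, smul_eq_mul]
    linear_combination w⁻¹ ^ (r + 1) * hinv
  have hderiv : d⁄dX K (w⁻¹ ^ (r + 1))
      = -((r + 1 : K⟦X⟧) * (d⁄dX K w * w⁻¹ ^ (r + 2))) := by
    rw [Derivation.leibniz_pow, derivative_inv', smul_eq_mul, Nat.add_sub_cancel]
    ring
  have hcoeff := congrArg (coeff r) hderiv
  rw [coeff_derivative, map_neg, ← map_natCast (C (R := K)), ← map_one (C (R := K)),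
    ← map_add, coeff_C_mul] at hcoeff
  rw [hsplit, map_add, coeff_succ_X_mul]
  exact mul_left_cancel₀ (Nat.cast_add_one_ne_zero r) (by linear_combination hcoeff)

/-- The left side is the residue of `u ^ i * u' / u ^ (N + 1)` for `u = X * w`. -/
theorem coeff_X_mul_pow_mul_derivative_mul_inv_pow [CharZero K] {w : K⟦X⟧}
    (hw : constantCoeff w ≠ 0) (i N : ℕ) :
    coeff N ((X * w) ^ i * d⁄dX K (X * w) * w⁻¹ ^ (N + 1)) = if i = N then 1 else 0 := by
  rcases lt_or_ge N i with hNi | hiN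
  · rw [if_neg hNi.ne', mul_pow, mul_assoc, mul_assoc, coeff_X_pow_mul', if_neg (by omega)]
  obtain ⟨s, rfl⟩ : ∃ s, N = i + s := ⟨N - i, by omega⟩
  have hcancel : (X * w) ^ i * d⁄dX K (X * w) * w⁻¹ ^ (i + s + 1)
      = X ^ i * (d⁄dX K (X * w) * w⁻¹ ^ (s + 1)) := by
    calc (X * w) ^ i * d⁄dX K (X * w) * w⁻¹ ^ (i + s + 1)
        = X ^ i * (d⁄dX K (X * w) * w⁻¹ ^ (s + 1)) * (w * w⁻¹) ^ i := by ring
      _ = _ := by rw [PowerSeries.mul_inv_cancel w hw, one_pow, mul_one]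
  rw [hcancel, coeff_X_pow_mul', if_pos (by omega), Nat.add_sub_cancel_left]
  rcases s with _ | r
  · rw [if_pos (add_zero i).symm, coeff_zero_eq_constantCoeff_apply]
    simp [Derivation.leibniz, hw]
  · rw [if_neg (by omega)]
    exact coeff_succ_derivative_X_mul_mul_inv_pow hw r

noncomputable def coeffExpMul (N : ℕ) (A : K⟦X⟧) : Polynomial K :=
  ∑ j ∈ range (N + 1), Polynomial.monomial j (coeff (N - j) A / j !)

theorem coeff_coeffExpMul (N : ℕ) (A : K⟦X⟧) {j : ℕ} (hj : j ≤ N) :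
    (coeffExpMul N A).coeff j = coeff (N - j) A / j ! := by
  simp [coeffExpMul, Polynomial.coeff_monomial, hj]

theorem sum_coeff_coeffExpMul_mul_factorial_mul_coeff [CharZero K] (N : ℕ) (A H : K⟦X⟧) :
    ∑ m ∈ range (N + 1), (coeffExpMul N A).coeff m * m ! * coeff m H = coeff N (A * H) := by
  rw [coeff_mul, Nat.sum_antidiagonal_eq_sum_range_succ (fun i j => coeff i A * coeff j H),
    ← sum_range_reflect (fun i => coeff i A * coeff (N - i) H)]
  refine sum_congr rfl fun m hm => ?_
  have hmN : m ≤ N := Nat.lt_succ_iff.mp (mem_range.mp hm)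
  have h0 : (m ! : K) ≠ 0 := Nat.cast_ne_zero.mpr (factorial_ne_zero _)
  rw [coeff_coeffExpMul N A hmN, Nat.succ_sub_one, Nat.sub_sub_self hmN]
  field_simp

section ExpAlgebra

variable [Algebra ℚ K]

theorem coeff_rescale_exp (a : K) (j : ℕ) : coeff j (rescale a (exp K)) = a ^ j / j ! := by
  simp [coeff_rescale, coeff_exp, div_eq_mul_inv]

theorem eval_coeffExpMul (N : ℕ) (A : K⟦X⟧) (x : K) :
    (coeffExpMul N A).eval x = coeff N (rescale x (exp K) * A) := by
  rw [coeffExpMul, Polynomial.eval_finsetSum, coeff_mul,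
    Nat.sum_antidiagonal_eq_sum_range_succ (fun i j => coeff i (rescale x (exp K)) * coeff j A)]
  refine sum_congr rfl fun j _ => ?_
  rw [Polynomial.eval_monomial, coeff_rescale_exp]
  ring

theorem factorial_mul_coeff_mul_rescale_exp [CharZero K] (G : K⟦X⟧) (a : K) {m n : ℕ}
    (hm : m < n) :
    m ! * coeff m (G * rescale a (exp K))
      = ∑ l ∈ range n, coeff l G * (m.descFactorial l * a ^ (m - l)) := by
  have hvanish : ∀ l ∈ range n, l ∉ range (m + 1) →
      coeff l G * (m.descFactorial l * a ^ (m - l)) = 0 := fun l _ hl => by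
    rw [descFactorial_eq_zero_iff_lt.mpr (by simpa using hl)]
    simp
  rw [← sum_subset (range_subset_range.mpr hm) hvanish, coeff_mul,
    Nat.sum_antidiagonal_eq_sum_range_succ (fun i j => coeff i G * coeff j (rescale a (exp K))),
    mul_sum]
  refine sum_congr rfl fun l hl => ?_
  have hlm : l ≤ m := Nat.lt_succ_iff.mp (mem_range.mp hl)
  have hfac : ((m - l)! : K) * m.descFactorial l = m ! := by
    exact_mod_cast factorial_mul_descFactorial hlm
  have h0 : ((m - l)! : K) ≠ 0 := Nat.cast_ne_zero.mpr (factorial_ne_zero _)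
  rw [coeff_rescale_exp, ← hfac]
  field_simp

theorem sum_coeff_mul_eval_iterate_derivative [CharZero K] (G : K⟦X⟧) {P : Polynomial K}
    {n : ℕ} (hP : P.natDegree < n) (a : K) :
    ∑ l ∈ range n, coeff l G * (Polynomial.derivative^[l] P).eval a
      = ∑ m ∈ range n, P.coeff m * m ! * coeff m (G * rescale a (exp K)) := by
  simp_rw [Polynomial.eval_iterate_derivative_eq_sum hP, mul_sum, mul_assoc]
  rw [sum_comm]
  refine sum_congr rfl fun m hm => ?_
  rw [factorial_mul_coeff_mul_rescale_exp G a (mem_range.mp hm), mul_sum]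
  exact sum_congr rfl fun l _ => by ring

end ExpAlgebra

end PowerSeries

namespace Habel

open Finset Nat

noncomputable def expNeg : ℚ⟦X⟧ := rescale (-1) (exp ℚ)

noncomputable def oneSubExpNegDivX : ℚ⟦X⟧ := PowerSeries.mk fun p => coeff (p + 1) (1 - expNeg)

theorem expNeg_pow (k : ℕ) : expNeg ^ k = rescale (-(k : ℚ)) (exp ℚ) := by
  rw [expNeg, ← map_pow, exp_pow_eq_rescale_exp, rescale_rescale, mul_neg_one]

theorem constantCoeff_expNeg : constantCoeff expNeg = 1 := by
  simp [expNeg, ← coeff_zero_eq_constantCoeff_apply]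

theorem X_mul_oneSubExpNegDivX : X * oneSubExpNegDivX = 1 - expNeg := by
  rw [oneSubExpNegDivX, ← sub_const_eq_X_mul_shift, map_sub, constantCoeff_expNeg, map_one,
    sub_self, map_zero, sub_zero]

theorem constantCoeff_oneSubExpNegDivX_ne_zero : constantCoeff oneSubExpNegDivX ≠ 0 := by
  simp [oneSubExpNegDivX, ← coeff_zero_eq_constantCoeff_apply, expNeg]

theorem derivative_X_mul_oneSubExpNegDivX : d⁄dX ℚ (X * oneSubExpNegDivX) = expNeg := by
  ext k
  have h0 : (k ! : ℚ) ≠ 0 := Nat.cast_ne_zero.mpr (factorial_ne_zero _)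
  rw [X_mul_oneSubExpNegDivX, coeff_derivative, map_sub, coeff_one, if_neg k.succ_ne_zero,
    zero_sub, expNeg, coeff_rescale_exp, coeff_rescale_exp, factorial_succ, pow_succ]
  push_cast
  field_simp

theorem expNeg_mul_exp : expNeg * exp ℚ = 1 := by
  have h := exp_mul_exp_eq_exp_add (-1 : ℚ) 1
  rw [rescale_one, neg_add_cancel, rescale_zero] at h
  simpa [expNeg] using h

theorem exp_sub_one_ne_zero : (exp ℚ - 1 : ℚ⟦X⟧) ≠ 0 := by
  intro h
  simpa [coeff_exp] using congrArg (coeff 1) h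

theorem eq_expNeg_mul_inv_oneSubExpNegDivX {B : ℚ⟦X⟧} (hB : B * (exp ℚ - 1) = X) :
    B = expNeg * oneSubExpNegDivX⁻¹ := by
  refine mul_right_cancel₀ exp_sub_one_ne_zero (hB.trans ?_)
  have hinv := PowerSeries.mul_inv_cancel _ constantCoeff_oneSubExpNegDivX_ne_zero
  linear_combination (-X) * hinv + oneSubExpNegDivX⁻¹ * X_mul_oneSubExpNegDivX
    - oneSubExpNegDivX⁻¹ * expNeg_mul_exp

theorem coeff_expNeg_pow_mul_expNeg_mul_inv_pow (p N : ℕ) :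
    coeff N (expNeg ^ p * (expNeg * oneSubExpNegDivX⁻¹ ^ (N + 1)))
      = (-1) ^ N * (p.choose N : ℚ) := by
  have hbinom : expNeg ^ p = ∑ k ∈ range (p + 1),
      C ((-1) ^ k * (p.choose k : ℚ)) * (X * oneSubExpNegDivX) ^ k := by
    rw [show expNeg = -(X * oneSubExpNegDivX) + 1 by rw [X_mul_oneSubExpNegDivX]; ring, add_pow]
    refine sum_congr rfl fun k _ => ?_
    rw [one_pow, mul_one, neg_pow, map_mul, map_pow, map_neg, map_one, map_natCast]
    ring
  simp_rw [hbinom, sum_mul, map_sum, ← derivative_X_mul_oneSubExpNegDivX, mul_assoc, coeff_C_mul,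
    ← mul_assoc, coeff_X_mul_pow_mul_derivative_mul_inv_pow
      constantCoeff_oneSubExpNegDivX_ne_zero, mul_ite, mul_one, mul_zero, sum_ite_eq', mem_range]
  split_ifs with hN
  · rfl
  · rw [choose_eq_zero_of_lt (by omega), cast_zero, mul_zero]

theorem coeff_expNeg_sq_mul_inv_pow {n : ℕ} (hn : 2 ≤ n) :
    coeff n (expNeg ^ 2 * oneSubExpNegDivX⁻¹ ^ (n + 1)) = 0 := by
  have hsplit : expNeg ^ 2
      = (X * oneSubExpNegDivX) ^ 0 * expNeg - (X * oneSubExpNegDivX) ^ 1 * expNeg := by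
    rw [X_mul_oneSubExpNegDivX]
    ring
  rw [hsplit, sub_mul, map_sub, ← derivative_X_mul_oneSubExpNegDivX,
    coeff_X_mul_pow_mul_derivative_mul_inv_pow constantCoeff_oneSubExpNegDivX_ne_zero,
    coeff_X_mul_pow_mul_derivative_mul_inv_pow constantCoeff_oneSubExpNegDivX_ne_zero,
    if_neg (by omega), if_neg (by omega), sub_zero]

theorem Phi_eq_ascPochhammer (n : ℕ) : Phi n = ascPochhammer ℚ (n - 1) := by
  rw [Phi]
  induction n - 1 with
  | zero => simp
  | succ k ih => rw [prod_range_succ, ih, ascPochhammer_succ_right, Polynomial.C_eq_natCast]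

theorem eval_neg_natCast_Phi_succ (N p : ℕ) :
    (Phi (N + 1)).eval (-(p : ℚ)) = (-1) ^ N * N ! * p.choose N := by
  rw [Phi_eq_ascPochhammer, Nat.add_sub_cancel, ascPochhammer_eval_neg_eq_descPochhammer,
    descPochhammer_eval_eq_descFactorial, descFactorial_eq_factorial_mul_choose]
  push_cast
  ring

theorem Phi_succ_eq_smul_coeffExpMul (N : ℕ) :
    Phi (N + 1) = (N ! : ℚ) • coeffExpMul N (expNeg * oneSubExpNegDivX⁻¹ ^ (N + 1)) := by
  refine Polynomial.eq_of_infinite_eval_eq _ _ (Set.infinite_of_injective_forall_mem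
    (f := fun p : ℕ => -(p : ℚ)) (fun a b h => by simpa using h) fun p => ?_)
  rw [Set.mem_ofPred_eq, Polynomial.eval_smul, eval_coeffExpMul, ← expNeg_pow,
    coeff_expNeg_pow_mul_expNeg_mul_inv_pow, eval_neg_natCast_Phi_succ, smul_eq_mul]
  ring

theorem mk_bernoulli_eval_div_factorial {B : ℚ⟦X⟧} (hB : B * (exp ℚ - 1) = X) (y : ℚ) :
    (PowerSeries.mk fun k => (Polynomial.bernoulli k).eval y / k !)
      = B * rescale y (exp ℚ) := by
  refine mul_right_cancel₀ exp_sub_one_ne_zero ?_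
  rw [mul_right_comm, hB]
  convert Polynomial.bernoulli_generating_function y using 3 with k
  simp [Polynomial.aeval_def, Polynomial.eval₂_eq_eval_map, div_eq_inv_mul]

theorem X_mul_mk_bernoulli_succ_eval {B : ℚ⟦X⟧} (hB : B * (exp ℚ - 1) = X) (y : ℚ) :
    X * (PowerSeries.mk fun l => (Polynomial.bernoulli (l + 1)).eval y / (l + 1)!)
      = B * rescale y (exp ℚ) - 1 := by
  rw [← mk_bernoulli_eval_div_factorial hB]
  simpa using
    (sub_const_eq_X_mul_shift (PowerSeries.mk fun k => (Polynomial.bernoulli k).eval y / k !)).symm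

theorem sum_coeff_mul_eval_iterate_derivative_Phi_succ (N : ℕ) (G : ℚ⟦X⟧) (a : ℚ) :
    ∑ l ∈ range (N + 1), coeff l G * (Polynomial.derivative^[l] (Phi (N + 1))).eval a
      = N ! * coeff N (expNeg * oneSubExpNegDivX⁻¹ ^ (N + 1) * (G * rescale a (exp ℚ))) := by
  have hdeg : (Phi (N + 1)).natDegree < N + 1 := by
    rw [Phi_eq_ascPochhammer, ascPochhammer_natDegree]
    omega
  rw [sum_coeff_mul_eval_iterate_derivative G hdeg,
    ← sum_coeff_coeffExpMul_mul_factorial_mul_coeff, mul_sum, Phi_succ_eq_smul_coeffExpMul]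
  simp only [Polynomial.coeff_smul, smul_eq_mul, mul_assoc]

theorem sum_bernoulli_mul_eval_iterate_derivative_Phi_succ {B : ℚ⟦X⟧}
    (hB : B * (exp ℚ - 1) = X) (N : ℕ) (y : ℚ) :
    ∑ l ∈ range (N + 1), (Polynomial.bernoulli (l + 1)).eval y / (l + 1)! *
        (Polynomial.derivative^[l] (Phi (N + 1))).eval (-y)
      = N ! * coeff (N + 1)
          (expNeg * oneSubExpNegDivX⁻¹ ^ (N + 1) * (B - rescale (-y) (exp ℚ))) := by
  have h := sum_coeff_mul_eval_iterate_derivative_Phi_succ N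
    (PowerSeries.mk fun l => (Polynomial.bernoulli (l + 1)).eval y / (l + 1)!) (-y)
  simp only [coeff_mk] at h
  rw [h, ← coeff_succ_X_mul, mul_left_comm, ← mul_assoc X, X_mul_mk_bernoulli_succ_eval hB]
  simp [sub_mul, mul_assoc, exp_mul_exp_eq_exp_add]

end Habel

open Habel in
/-- Habel's conjectured formula: for every even `n ≥ 2`,
`(2/n!)·B_n^{(n)}(n/2) = −(2/(n−1)!)·Σ_{l=0}^{n−1} (B_{l+1}(n/2−1)/(l+1)!)·Φ^{(l)}(1−n/2)`,
where `B_k^{(n)}(x) = k!·[t^k]((t/(e^t−1))^n · e^{xt})` is the generalized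
Bernoulli polynomial, `B_m` the ordinary Bernoulli polynomials, and
`Φ(x) = ∏_{i=0}^{n−2}(x+i)`. -/
theorem genBernoulli_eq_habel
    (B : PowerSeries ℚ)
    (hB : B * (PowerSeries.exp ℚ - 1) = PowerSeries.X) :
    ∀ n : ℕ, Even n → 2 ≤ n →
      (2 / (Nat.factorial n : ℚ)) *
          ((Nat.factorial n : ℚ) *
            PowerSeries.coeff (R := ℚ) n
              (B ^ n * PowerSeries.rescale ((n : ℚ) / 2) (PowerSeries.exp ℚ)))
        = -(2 / (Nat.factorial (n - 1) : ℚ)) *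
            ∑ l ∈ Finset.range n,
              (Polynomial.eval ((n : ℚ) / 2 - 1) (Polynomial.bernoulli (l + 1))
                  / (Nat.factorial (l + 1) : ℚ)) *
                Polynomial.eval (1 - (n : ℚ) / 2)
                  ((fun p => Polynomial.derivative p)^[l] (Phi n)) := by
  intro n _ hn
  obtain ⟨N, rfl⟩ : ∃ N, n = N + 1 := ⟨n - 1, by omega⟩
  set c : ℚ := ((N + 1 : ℕ) : ℚ) / 2
  have hexp : expNeg * rescale (-(c - 1)) (exp ℚ) = expNeg ^ (N + 1) * rescale c (exp ℚ) := by
    rw [expNeg_pow, expNeg, exp_mul_exp_eq_exp_add, exp_mul_exp_eq_exp_add]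
    congr 2
    simp only [c]
    push_cast
    ring
  have hsplit : expNeg * oneSubExpNegDivX⁻¹ ^ (N + 1) * (B - rescale (-(c - 1)) (exp ℚ))
      = expNeg ^ 2 * oneSubExpNegDivX⁻¹ ^ (N + 1 + 1) - B ^ (N + 1) * rescale c (exp ℚ) := by
    rw [eq_expNeg_mul_inv_oneSubExpNegDivX hB]
    linear_combination (-oneSubExpNegDivX⁻¹ ^ (N + 1)) * hexp
  rw [Nat.add_sub_cancel, show 1 - c = -(c - 1) by ring,
    sum_bernoulli_mul_eval_iterate_derivative_Phi_succ hB, hsplit, map_sub,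
    coeff_expNeg_sq_mul_inv_pow hn]
  field_simp
  ring
end
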